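/- There exists δ > 0 depending only on N such that for every ℓ > 0, Q = (−ℓ,ℓ)², A ∈ ℝ^{N×2}, b ∈ ℝ^N: if ℓ^{−2} ∫_Q dist(Ax+b, ℤ^N) dx ≤ δ, then there exists z ∈ ℤ^N with ∫_Q |Ax+b−z| dx = ∫_Q dist(Ax+b, ℤ^N) dx, i.e., the nearest integer point to the affine map is a.e. a single constant z. -/

import Mathlib

open MeasureTheory

noncomputable section

/-- Euclidean norm of a vector given as a function. -/
def enorm' {N : ℕ} (v : Fin N → ℝ) : ℝ := Real.sqrt (∑ i, (v i) ^ 2)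

/-- Euclidean distance of a vector to the integer lattice `ℤᴺ`. -/
def distZ {N : ℕ} (v : Fin N → ℝ) : ℝ :=
  ⨅ z : Fin N → ℤ, enorm' (fun i => v i - (z i : ℝ))

/-!
Coordinatewise, the distance of `s` to `ℤ` dominates `(1 - cos 2πs) / 2π`, whose integral over a
segment is explicit: `∫_{-ℓ}^{ℓ} (1 - cos (y t + θ)) dt = 2ℓ (1 - sinc (yℓ) cos θ)`, and
`1 - |sinc x| ≥ min (x², 1) / 20`. Integrating over the square with Fubini, a small mean distance
forces `ℓ |A i j| ≤ 1/10`, so on `Q` each coordinate of `Ax + b` stays within `1/5` of `b i`.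
Averaging then puts `b i` within `1/5 + 1/400` of `round (b i)`, hence `round (Ax + b) = round b`
on all of `Q`, and `z = round b` realizes the distance everywhere.
-/

open Real Set

namespace LatticeRigidity

lemma sin_le_sub_cube_div_twenty {x : ℝ} (hx₀ : 0 ≤ x) (hx₂ : x ≤ 2) : sin x ≤ x - x ^ 3 / 20 := by
  have hcos₀ : 0 ≤ cos (x / 2) := cos_nonneg_of_neg_pi_div_two_le_of_le (by linarith [pi_pos])
    (by linarith [pi_gt_three])
  have hcos : cos (x / 2) ≤ 1 - 2 / π ^ 2 * (x / 2) ^ 2 :=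
    cos_le_one_sub_mul_cos_sq (by rw [abs_of_nonneg (by linarith)]; linarith [pi_gt_three])
  have hsin : sin (x / 2) ≤ x / 2 := sin_le (by linarith)
  have hπ : x ^ 2 / 20 ≤ 2 / π ^ 2 * (x / 2) ^ 2 := by
    rw [div_mul_eq_mul_div, le_div_iff₀ (by positivity)]
    have hπ2 : π ^ 2 < 10 := by nlinarith [pi_lt_d2, pi_pos]
    nlinarith [mul_le_mul_of_nonneg_left hπ2.le (sq_nonneg x)]
  calc sin x = 2 * sin (x / 2) * cos (x / 2) := by rw [← sin_two_mul]; ring_nf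
    _ ≤ 2 * (x / 2) * (1 - x ^ 2 / 20) := by
        gcongr
        linarith
    _ = x - x ^ 3 / 20 := by ring

lemma one_sub_cos_two_pi_mul_le (s : ℝ) : (1 - cos (2 * π * s)) / (2 * π) ≤ |s - round s| := by
  have hcos : cos (2 * π * s) = cos (2 * π * (s - round s)) := by
    rw [show 2 * π * s = 2 * π * (s - round s) + (round s : ℤ) * (2 * π) by ring,
      cos_add_int_mul_two_pi]
  have := abs_cos_sub_cos_le (2 * π * (s - round s)) 0
  rw [div_le_iff₀ (by positivity), hcos]
  rw [cos_zero, sub_zero, abs_mul, abs_of_pos (by positivity : 0 < 2 * π)] at this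
  linarith [neg_abs_le (cos (2 * π * (s - round s)) - 1)]

lemma round_eq_of_abs_sub_lt {x : ℝ} {n : ℤ} (h : |x - n| < 1 / 2) : round x = n := by
  rw [round_eq_iff]
  constructor <;> linarith [abs_lt.mp h]

lemma min_sq_one_div_twenty_le_one_sub_abs_sinc (x : ℝ) : min (x ^ 2) 1 / 20 ≤ 1 - |sinc x| := by
  wlog hx : 0 ≤ x generalizing x
  · simpa [sinc_neg] using this (-x) (by linarith)
  rcases hx.eq_or_lt with rfl | hx₀
  · simp
  rw [sinc_of_ne_zero hx₀.ne', abs_div, abs_of_pos hx₀, le_sub_iff_add_le, ← le_sub_iff_add_le',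
    div_le_iff₀ hx₀]
  rcases le_or_gt x 2 with hx₂ | hx₂
  · have := sin_le_sub_cube_div_twenty hx hx₂
    rw [abs_of_nonneg (sin_nonneg_of_nonneg_of_le_pi hx (by linarith [pi_gt_three]))]
    nlinarith [mul_le_mul_of_nonneg_left (min_le_left (x ^ 2) 1) hx]
  · nlinarith [abs_sin_le_one x, mul_le_mul_of_nonneg_left (min_le_right (x ^ 2) 1) hx]

lemma integral_cos_mul_add (y θ ℓ : ℝ) :
    ∫ t in (-ℓ)..ℓ, cos (y * t + θ) = 2 * ℓ * sinc (y * ℓ) * cos θ := by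
  rcases eq_or_ne y 0 with rfl | hy
  · simp only [zero_mul, zero_add, intervalIntegral.integral_const, sinc_zero, smul_eq_mul]
    ring
  rcases eq_or_ne ℓ 0 with rfl | hℓ
  · simp
  rw [intervalIntegral.integral_comp_mul_add cos hy, integral_cos, sinc_of_ne_zero (by positivity),
    mul_neg, sin_sub_sin, smul_eq_mul]
  field_simp
  ring_nf

lemma le_integral_one_sub_cos {ℓ : ℝ} (hℓ : 0 ≤ ℓ) (y θ : ℝ) :
    ℓ * min ((y * ℓ) ^ 2) 1 / 10 ≤ ∫ t in (-ℓ)..ℓ, (1 - cos (y * t + θ)) := by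
  have hcos : Continuous fun t => cos (y * t + θ) := by fun_prop
  rw [intervalIntegral.integral_sub intervalIntegrable_const (hcos.intervalIntegrable _ _),
    intervalIntegral.integral_const, integral_cos_mul_add, smul_eq_mul]
  have hsinc : sinc (y * ℓ) * cos θ ≤ |sinc (y * ℓ)| := by
    calc sinc (y * ℓ) * cos θ ≤ |sinc (y * ℓ)| * |cos θ| := by rw [← abs_mul]; exact le_abs_self _
      _ ≤ |sinc (y * ℓ)| := mul_le_of_le_one_right (abs_nonneg _) (abs_cos_le_one θ)
  nlinarith [min_sq_one_div_twenty_le_one_sub_abs_sinc (y * ℓ)]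

section LatticeDistance

variable {N : ℕ}

lemma enorm'_sub_eq_dist (v w : Fin N → ℝ) :
    enorm' (fun i => v i - w i) =
      dist (WithLp.toLp 2 v : EuclideanSpace ℝ (Fin N)) (WithLp.toLp 2 w) := by
  simp [enorm', EuclideanSpace.dist_eq, Real.dist_eq, sq_abs]

lemma distZ_eq_infDist (v : Fin N → ℝ) :
    distZ v = Metric.infDist (WithLp.toLp 2 v : EuclideanSpace ℝ (Fin N))
      (range fun z : Fin N → ℤ => WithLp.toLp 2 fun i => (z i : ℝ)) := by
  simp only [distZ, enorm'_sub_eq_dist, Metric.infDist_eq_iInf]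
  exact rangeFactorization_surjective.iInf_comp fun y : range (fun z : Fin N → ℤ =>
    (WithLp.toLp 2 fun i => (z i : ℝ) : EuclideanSpace ℝ (Fin N))) => dist (WithLp.toLp 2 v) y

lemma continuous_distZ : Continuous (distZ (N := N)) := by
  simp_rw [funext distZ_eq_infDist]
  exact (Metric.continuous_infDist_pt _).comp (PiLp.continuous_toLp 2 _)

lemma distZ_eq_enorm'_sub_round (v : Fin N → ℝ) :
    distZ v = enorm' (fun i => v i - (round (v i) : ℝ)) := by
  refine le_antisymm (ciInf_le ⟨0, ?_⟩ _) (le_ciInf fun z => ?_)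
  · rintro _ ⟨z, rfl⟩
    exact sqrt_nonneg _
  · refine sqrt_le_sqrt (Finset.sum_le_sum fun i _ => ?_)
    simpa only [sq_abs] using pow_le_pow_left₀ (abs_nonneg _) (round_le (v i) (z i)) 2

lemma abs_sub_round_le_distZ (v : Fin N → ℝ) (i : Fin N) : |v i - round (v i)| ≤ distZ v := by
  rw [distZ_eq_enorm'_sub_round]
  exact abs_le_sqrt (Finset.single_le_sum (f := fun j => (v j - round (v j)) ^ 2)
    (fun j _ => sq_nonneg _) (Finset.mem_univ i))

end LatticeDistance

def square (ℓ : ℝ) : Set (ℝ × ℝ) := Ioo (-ℓ) ℓ ×ˢ Ioo (-ℓ) ℓ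

lemma measurableSet_square (ℓ : ℝ) : MeasurableSet (square ℓ) :=
  measurableSet_Ioo.prod measurableSet_Ioo

lemma volume_square_ne_top (ℓ : ℝ) : volume (square ℓ) ≠ ⊤ := by
  simp [square, Measure.volume_eq_prod, Measure.prod_prod, ENNReal.mul_eq_top]

lemma measureReal_square {ℓ : ℝ} (hℓ : 0 ≤ ℓ) : volume.real (square ℓ) = (2 * ℓ) ^ 2 := by
  rw [measureReal_def, square, Measure.volume_eq_prod, Measure.prod_prod, Real.volume_Ioo,
    ENNReal.toReal_mul, ENNReal.toReal_ofReal (by linarith)]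
  ring

lemma integrableOn_square_of_continuous {f : ℝ × ℝ → ℝ} (hf : Continuous f) (ℓ : ℝ) :
    IntegrableOn f (square ℓ) :=
  (hf.continuousOn.integrableOn_compact (isCompact_Icc.prod isCompact_Icc)).mono_set
    (prod_mono Ioo_subset_Icc_self Ioo_subset_Icc_self)

lemma setIntegral_square_comp_swap (f : ℝ × ℝ → ℝ) (ℓ : ℝ) :
    ∫ p in square ℓ, f p.swap = ∫ p in square ℓ, f p := by
  have hswap : Prod.swap ⁻¹' square ℓ = square ℓ := preimage_swap_prod _ _
  conv_lhs => rw [← hswap]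
  exact Measure.measurePreserving_swap.setIntegral_preimage_emb
    MeasurableEquiv.prodComm.measurableEmbedding f _

lemma le_setIntegral_square {ℓ m : ℝ} (hℓ : 0 ≤ ℓ) {f : ℝ × ℝ → ℝ} (hf : IntegrableOn f (square ℓ))
    (hm : ∀ s, m ≤ ∫ t in (-ℓ)..ℓ, f (s, t)) : 2 * ℓ * m ≤ ∫ p in square ℓ, f p := by
  rw [square, Measure.volume_eq_prod] at hf ⊢
  rw [setIntegral_prod _ hf]
  have hinner : IntegrableOn (fun s => ∫ t in Ioo (-ℓ) ℓ, f (s, t)) (Ioo (-ℓ) ℓ) := by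
    rw [IntegrableOn, ← Measure.prod_restrict] at hf
    exact hf.integral_prod_left
  have hvol : volume.real (Ioo (-ℓ) ℓ) = 2 * ℓ := by
    rw [Real.volume_real_Ioo_of_le (by linarith)]
    ring
  calc 2 * ℓ * m = m * volume.real (Ioo (-ℓ) ℓ) := by rw [hvol, mul_comm]
    _ ≤ _ := setIntegral_ge_of_const_le_real measurableSet_Ioo measure_Ioo_lt_top.ne
        (fun s _ => by
          simpa [intervalIntegral.integral_of_le, hℓ, integral_Ioc_eq_integral_Ioo] using hm s)
        hinner

lemma euclideanSquare_eq_preimage (ℓ : ℝ) :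
    {x : EuclideanSpace ℝ (Fin 2) | ∀ i, |x i| < ℓ} = (fun x => (x 0, x 1)) ⁻¹' square ℓ := by
  ext x
  simp [square, Fin.forall_fin_two, abs_lt]

lemma measurableSet_euclideanSquare (ℓ : ℝ) :
    MeasurableSet {x : EuclideanSpace ℝ (Fin 2) | ∀ i, |x i| < ℓ} := by
  rw [euclideanSquare_eq_preimage]
  exact (measurableSet_square ℓ).preimage (by fun_prop)

lemma setIntegral_euclideanSquare (f : ℝ × ℝ → ℝ) (ℓ : ℝ) :
    ∫ x in {x : EuclideanSpace ℝ (Fin 2) | ∀ i, |x i| < ℓ}, f (x 0, x 1) =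
      ∫ p in square ℓ, f p := by
  rw [euclideanSquare_eq_preimage]
  exact ((EuclideanSpace.volume_preserving_symm_measurableEquiv_toLp (Fin 2)).trans
    (volume_preserving_finTwoArrow ℝ)).setIntegral_preimage_emb
    (MeasurableEquiv.measurableEmbedding _) f _

lemma le_setIntegral_square_of_abs_sub_round_le {ℓ : ℝ} (hℓ : 0 ≤ ℓ) {f : ℝ × ℝ → ℝ}
    (hf : IntegrableOn f (square ℓ)) (u a c : ℝ)
    (h : ∀ p : ℝ × ℝ, |u * p.1 + a * p.2 + c - round (u * p.1 + a * p.2 + c)| ≤ f p) :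
    ℓ ^ 2 * min ((2 * π * a * ℓ) ^ 2) 1 / (10 * π) ≤ ∫ p in square ℓ, f p := by
  set g : ℝ × ℝ → ℝ := fun p => (1 - cos (2 * π * (u * p.1 + a * p.2 + c))) / (2 * π)
  have hg : IntegrableOn g (square ℓ) := integrableOn_square_of_continuous (by fun_prop) ℓ
  have hinner :
      ∀ s, ℓ * min ((2 * π * a * ℓ) ^ 2) 1 / 10 / (2 * π) ≤ ∫ t in (-ℓ)..ℓ, g (s, t) := by
    intro s
    have hgs : (fun t => g (s, t)) =
        fun t => (1 - cos (2 * π * a * t + 2 * π * (u * s + c))) / (2 * π) := by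
      funext t
      simp only [g]
      ring_nf
    rw [hgs, intervalIntegral.integral_div]
    gcongr
    exact le_integral_one_sub_cos hℓ _ _
  calc ℓ ^ 2 * min ((2 * π * a * ℓ) ^ 2) 1 / (10 * π)
      = 2 * ℓ * (ℓ * min ((2 * π * a * ℓ) ^ 2) 1 / 10 / (2 * π)) := by
        field_simp
    _ ≤ ∫ p in square ℓ, g p := le_setIntegral_square hℓ hg hinner
    _ ≤ ∫ p in square ℓ, f p := setIntegral_mono_on hg hf (measurableSet_square ℓ)
        fun p _ => (one_sub_cos_two_pi_mul_le _).trans (h p)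

lemma mul_abs_le_of_min_sq_le {ℓ a : ℝ} (hℓ : 0 < ℓ)
    (h : ℓ ^ 2 * min ((2 * π * a * ℓ) ^ 2) 1 / (10 * π) ≤ ℓ ^ 2 / 100) : ℓ * |a| ≤ 1 / 10 := by
  have hπ := pi_gt_three
  have hmin : min ((2 * π * a * ℓ) ^ 2) 1 ≤ π / 10 := by
    refine le_of_mul_le_mul_left ?_ (by positivity : 0 < ℓ ^ 2 / (10 * π))
    calc ℓ ^ 2 / (10 * π) * min ((2 * π * a * ℓ) ^ 2) 1 ≤ ℓ ^ 2 / 100 := by rwa [div_mul_eq_mul_div]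
      _ = ℓ ^ 2 / (10 * π) * (π / 10) := by field_simp; ring
  have hsq : (2 * π * a * ℓ) ^ 2 ≤ π / 10 := by
    rcases min_cases ((2 * π * a * ℓ) ^ 2) 1 with ⟨hm, _⟩ | ⟨hm, _⟩ <;> rw [hm] at hmin
    · exact hmin
    · linarith [pi_lt_four]
  rw [← abs_of_pos hℓ, ← abs_mul]
  refine abs_le_of_sq_le_sq ?_ (by norm_num)
  have h40 : π * (40 * π * (ℓ * a) ^ 2) ≤ π * 1 := by nlinarith
  nlinarith [le_of_mul_le_mul_left h40 pi_pos]

section AffineCoordinates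

variable {N : ℕ}

def affineAt (A : Matrix (Fin N) (Fin 2) ℝ) (b : Fin N → ℝ) (p : ℝ × ℝ) : Fin N → ℝ :=
  fun i => A i 0 * p.1 + A i 1 * p.2 + b i

lemma continuous_affineAt (A : Matrix (Fin N) (Fin 2) ℝ) (b : Fin N → ℝ) :
    Continuous (affineAt A b) :=
  continuous_pi fun i => by unfold affineAt; fun_prop

variable {ℓ : ℝ} {A : Matrix (Fin N) (Fin 2) ℝ} {b : Fin N → ℝ}

lemma mul_abs_entry_le (hℓ : 0 < ℓ) (hint : ∫ p in square ℓ, distZ (affineAt A b p) ≤ ℓ ^ 2 / 100)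
    (i : Fin N) (j : Fin 2) : ℓ * |A i j| ≤ 1 / 10 := by
  have hf : Continuous fun p => distZ (affineAt A b p) :=
    continuous_distZ.comp (continuous_affineAt A b)
  have key : ℓ ^ 2 * min ((2 * π * A i j * ℓ) ^ 2) 1 / (10 * π) ≤ ℓ ^ 2 / 100 := by
    refine le_trans ?_ hint
    fin_cases j
    · have hswap : ∀ p : ℝ × ℝ, affineAt A b p.swap i = A i 1 * p.1 + A i 0 * p.2 + b i :=
        fun p => by simp only [affineAt, Prod.fst_swap, Prod.snd_swap]; ring
      rw [← setIntegral_square_comp_swap]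
      exact le_setIntegral_square_of_abs_sub_round_le hℓ.le
        (integrableOn_square_of_continuous (hf.comp continuous_swap) ℓ) (A i 1) (A i 0) (b i)
        fun p => hswap p ▸ abs_sub_round_le_distZ (affineAt A b p.swap) i
    · exact le_setIntegral_square_of_abs_sub_round_le hℓ.le
        (integrableOn_square_of_continuous hf ℓ) (A i 0) (A i 1) (b i)
        fun p => abs_sub_round_le_distZ (affineAt A b p) i
  exact mul_abs_le_of_min_sq_le hℓ key

lemma abs_affineAt_sub_le (hA : ∀ i j, ℓ * |A i j| ≤ 1 / 10) {p : ℝ × ℝ} (hp : p ∈ square ℓ)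
    (i : Fin N) : |affineAt A b p i - b i| ≤ 1 / 5 := by
  obtain ⟨hp₁, hp₂⟩ := hp
  have h₁ : |p.1| ≤ ℓ := abs_le.mpr ⟨hp₁.1.le, hp₁.2.le⟩
  have h₂ : |p.2| ≤ ℓ := abs_le.mpr ⟨hp₂.1.le, hp₂.2.le⟩
  calc |affineAt A b p i - b i| = |A i 0 * p.1 + A i 1 * p.2| := by simp [affineAt]
    _ ≤ |A i 0| * |p.1| + |A i 1| * |p.2| := by
        simpa only [abs_mul] using abs_add_le (A i 0 * p.1) (A i 1 * p.2)
    _ ≤ ℓ * |A i 0| + ℓ * |A i 1| := by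
        rw [mul_comm ℓ, mul_comm ℓ]
        gcongr
    _ ≤ 1 / 5 := by linarith [hA i 0, hA i 1]

lemma abs_sub_round_le_of_setIntegral_le (hℓ : 0 < ℓ)
    (hint : ∫ p in square ℓ, distZ (affineAt A b p) ≤ ℓ ^ 2 / 100)
    (hA : ∀ i j, ℓ * |A i j| ≤ 1 / 10) (i : Fin N) : |b i - round (b i)| ≤ 1 / 5 + 1 / 400 := by
  have hpt : ∀ p ∈ square ℓ, |b i - round (b i)| - 1 / 5 ≤ distZ (affineAt A b p) := by
    intro p hp
    rw [sub_le_iff_le_add']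
    set w := affineAt A b p
    calc |b i - round (b i)| ≤ |b i - round (w i)| := round_le _ _
      _ ≤ |b i - w i| + |w i - round (w i)| := abs_sub_le _ _ _
      _ ≤ 1 / 5 + distZ w := add_le_add (abs_sub_comm (b i) (w i) ▸ abs_affineAt_sub_le hA hp i)
          (abs_sub_round_le_distZ w i)
  have hmean := setIntegral_ge_of_const_le_real (measurableSet_square ℓ)
    (volume_square_ne_top ℓ) hpt
    (integrableOn_square_of_continuous (continuous_distZ.comp (continuous_affineAt A b)) ℓ)
  rw [measureReal_square hℓ.le] at hmean
  have h400 : (|b i - round (b i)| - 1 / 5) * (2 * ℓ) ^ 2 ≤ 1 / 400 * (2 * ℓ) ^ 2 := by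
    linarith
  linarith [le_of_mul_le_mul_right h400 (by positivity)]

lemma round_affineAt_eq (hℓ : 0 < ℓ)
    (hint : ∫ p in square ℓ, distZ (affineAt A b p) ≤ ℓ ^ 2 / 100) {p : ℝ × ℝ} (hp : p ∈ square ℓ)
    (i : Fin N) : round (affineAt A b p i) = round (b i) := by
  have hA := mul_abs_entry_le hℓ hint
  have h₁ := abs_affineAt_sub_le (b := b) hA hp i
  have h₂ := abs_sub_round_le_of_setIntegral_le hℓ hint hA i
  refine round_eq_of_abs_sub_lt ?_
  calc |affineAt A b p i - round (b i)| ≤ |affineAt A b p i - b i| + |b i - round (b i)| :=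
        abs_sub_le _ _ _
    _ < 1 / 2 := by linarith

end AffineCoordinates

end LatticeRigidity

open LatticeRigidity

theorem stmt8 (N : ℕ) :
    ∃ δ > 0, ∀ ℓ : ℝ, 0 < ℓ → ∀ (A : Matrix (Fin N) (Fin 2) ℝ) (b : Fin N → ℝ),
      (ℓ ^ 2)⁻¹ *
          (∫ x in {x : EuclideanSpace ℝ (Fin 2) | ∀ i, |x i| < ℓ},
            distZ (fun i => A.mulVec (fun j => x j) i + b i)) ≤ δ →
      ∃ z : Fin N → ℤ,
        (∫ x in {x : EuclideanSpace ℝ (Fin 2) | ∀ i, |x i| < ℓ},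
            enorm' (fun i => A.mulVec (fun j => x j) i + b i - (z i : ℝ))) =
        ∫ x in {x : EuclideanSpace ℝ (Fin 2) | ∀ i, |x i| < ℓ},
          distZ (fun i => A.mulVec (fun j => x j) i + b i) := by
  refine ⟨1 / 100, by norm_num, fun ℓ hℓ A b hint => ⟨fun i => round (b i), ?_⟩⟩
  have hA : ∀ (x : EuclideanSpace ℝ (Fin 2)) i,
      A.mulVec (fun j => x j) i + b i = affineAt A b (x 0, x 1) i := fun x i => by
    simp [affineAt, Matrix.mulVec, dotProduct, Fin.sum_univ_two]
  simp_rw [hA] at hint ⊢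
  have hQ : ∫ p in square ℓ, distZ (affineAt A b p) ≤ ℓ ^ 2 / 100 := by
    rw [setIntegral_euclideanSquare (fun p => distZ (affineAt A b p)),
      inv_mul_le_iff₀ (by positivity)] at hint
    linarith
  refine setIntegral_congr_fun (measurableSet_euclideanSquare ℓ) fun x hx => ?_
  have hx' : (x 0, x 1) ∈ square ℓ := by rwa [euclideanSquare_eq_preimage] at hx
  simp only [distZ_eq_enorm'_sub_round, round_affineAt_eq hℓ hQ hx']
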